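/- Let A be a d×d matrix over ℝ ∪ {-∞} with a circuit in its graph. Then there exist an index k and a positive integer c ≤ d such that (A^{⊗c})_{kk} = c·ρ_max(A); consequently, for all n ≥ 1 and x ∈ ℝ^d, max_i (A^{⊗(nc)} x)_i ≥ n·c·ρ_max(A) + x_k. -/

import Mathlib

/-!
The maximum circuit mean `ρ` is attained by an elementary circuit of length `c` through `k`;
following it once gives `(A^{⊗c})_{kk} ≥ cρ`. Conversely `(A^{⊗c})_{kk}` is the weight of a
closed walk of length `c`; cutting a closed walk at a repeated vertex splits it into shorter
closed walks, so it decomposes into elementary circuits and weighs at most `cρ`. Going around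
the circuit `n` times gives `(A^{⊗nc})_{kk} ≥ ncρ`, which bounds the maximum from below.
-/

/-- The `(max,+)` matrix product over the semiring `(ℝ ∪ {-∞}, max, +)`. -/
def mpMul {d : ℕ} (A B : Fin d → Fin d → WithBot ℝ) : Fin d → Fin d → WithBot ℝ :=
  fun i j => Finset.univ.sup (fun p => A i p + B p j)

/-- The `n`-th `(max,+)` power of a matrix. -/
def mpPow {d : ℕ} (A : Fin d → Fin d → WithBot ℝ) : ℕ → Fin d → Fin d → WithBot ℝ
  | 0 => fun i j => if i = j then (0 : WithBot ℝ) else ⊥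
  | n + 1 => mpMul A (mpPow A n)

/-- `p : Fin (c+1) → Fin d` is an elementary circuit of the graph of `A`. -/
def IsElemCircuit {d : ℕ} (A : Fin d → Fin d → WithBot ℝ) (c : ℕ)
    (p : Fin (c + 1) → Fin d) : Prop :=
  0 < c ∧ p 0 = p (Fin.last c) ∧
  (∀ k : Fin c, A (p k.castSucc) (p k.succ) ≠ ⊥) ∧
  Function.Injective (fun k : Fin c => p k.castSucc)

/-- The set of average weights of elementary circuits of `A`;
`ρ_max(A)` is its supremum. -/
def circuitAvgWeights {d : ℕ} (A : Fin d → Fin d → WithBot ℝ) : Set ℝ :=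
  {r : ℝ | ∃ (c : ℕ) (p : Fin (c + 1) → Fin d), IsElemCircuit A c p ∧
    r = (∑ k : Fin c, WithBot.unbotD 0 (A (p k.castSucc) (p k.succ))) / c}

open Finset

lemma WithBot.coe_sum_unbotD {ι M : Type*} [AddCommMonoid M] {s : Finset ι}
    {f : ι → WithBot M} (d : M) (h : ∀ i ∈ s, f i ≠ ⊥) :
    ((∑ i ∈ s, (f i).unbotD d : M) : WithBot M) = ∑ i ∈ s, f i := by
  rw [WithBot.coe_sum]
  refine sum_congr rfl fun i hi => ?_
  obtain ⟨r, hr⟩ := WithBot.ne_bot_iff_exists.mp (h i hi)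
  rw [← hr, WithBot.unbotD_coe]

section MaxPlus

variable {d : ℕ} (A : Fin d → Fin d → WithBot ℝ)

lemma le_mpPow_succ_apply (n : ℕ) (i p j : Fin d) :
    A i p + mpPow A n p j ≤ mpPow A (n + 1) i j :=
  le_sup (f := fun p => A i p + mpPow A n p j) (mem_univ p)

lemma exists_mpPow_succ_apply_eq (n : ℕ) (i j : Fin d) :
    ∃ p, mpPow A (n + 1) i j = A i p + mpPow A n p j := by
  obtain ⟨p, -, hp⟩ :=
    exists_mem_eq_sup univ ⟨i, mem_univ i⟩ (fun p => A i p + mpPow A n p j)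
  exact ⟨p, hp⟩

lemma mpPow_add_le (a b : ℕ) (i k j : Fin d) :
    mpPow A a i k + mpPow A b k j ≤ mpPow A (a + b) i j := by
  induction a generalizing i with
  | zero =>
    by_cases hik : i = k
    · subst hik; simp [mpPow]
    · simp [mpPow, hik]
  | succ a ih =>
    obtain ⟨p, hp⟩ := exists_mpPow_succ_apply_eq A a i k
    calc mpPow A (a + 1) i k + mpPow A b k j = A i p + (mpPow A a p k + mpPow A b k j) := by
          rw [hp, add_assoc]
      _ ≤ A i p + mpPow A (a + b) p j := by gcongr; exact ih p
      _ ≤ mpPow A (a + 1 + b) i j := by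
          rw [add_right_comm]; exact le_mpPow_succ_apply A _ i p j

lemma coe_mul_le_mpPow_mul {c : ℕ} {i : Fin d} {r : ℝ} (h : (r : WithBot ℝ) ≤ mpPow A c i i)
    (n : ℕ) : ((n * r : ℝ) : WithBot ℝ) ≤ mpPow A (n * c) i i := by
  induction n with
  | zero => simp [mpPow]
  | succ n ih =>
    calc (((n + 1 : ℕ) * r : ℝ) : WithBot ℝ) = ((n * r : ℝ) : WithBot ℝ) + r := by
          rw [← WithBot.coe_add, Nat.cast_succ, add_one_mul]
      _ ≤ mpPow A (n * c) i i + mpPow A c i i := add_le_add ih h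
      _ ≤ mpPow A ((n + 1) * c) i i := by rw [Nat.succ_mul]; exact mpPow_add_le A _ _ i i i

def walkWeight (q : ℕ → Fin d) (n : ℕ) : WithBot ℝ :=
  ∑ m ∈ range n, A (q m) (q (m + 1))

lemma walkWeight_add (q : ℕ → Fin d) (a b : ℕ) :
    walkWeight A q (a + b) = walkWeight A q a + walkWeight A (fun m => q (a + m)) b := by
  simp only [walkWeight, sum_range_add, add_assoc]

lemma walkWeight_succ (q : ℕ → Fin d) (n : ℕ) :
    walkWeight A q (n + 1) = A (q 0) (q 1) + walkWeight A (fun m => q (m + 1)) n := by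
  rw [walkWeight, sum_range_succ', add_comm]; rfl

lemma walkWeight_le_mpPow (q : ℕ → Fin d) (n : ℕ) :
    walkWeight A q n ≤ mpPow A n (q 0) (q n) := by
  induction n generalizing q with
  | zero => simp [walkWeight, mpPow]
  | succ n ih =>
    rw [walkWeight_succ]
    calc A (q 0) (q 1) + walkWeight A (fun m => q (m + 1)) n
        ≤ A (q 0) (q 1) + mpPow A n (q 1) (q (n + 1)) := by gcongr; exact ih _
      _ ≤ mpPow A (n + 1) (q 0) (q (n + 1)) := le_mpPow_succ_apply A n _ _ _

lemma exists_walkWeight_eq_mpPow {n : ℕ} {i j : Fin d} (h : mpPow A n i j ≠ ⊥) :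
    ∃ q : ℕ → Fin d, q 0 = i ∧ q n = j ∧ walkWeight A q n = mpPow A n i j := by
  induction n generalizing i with
  | zero =>
    have hij : i = j := by by_contra hij; simp [mpPow, hij] at h
    exact ⟨fun _ => i, rfl, hij, by simp [walkWeight, mpPow, hij]⟩
  | succ n ih =>
    obtain ⟨p, hp⟩ := exists_mpPow_succ_apply_eq A n i j
    rw [hp, Ne, WithBot.add_eq_bot, not_or] at h
    obtain ⟨q, hq0, hqn, hq⟩ := ih h.2
    refine ⟨fun | 0 => i | m + 1 => q m, rfl, hqn, ?_⟩
    rw [hp, walkWeight_succ, ← hq, ← hq0]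

lemma walkWeight_splice (q : ℕ → Fin d) (i L R : ℕ) (h : q (i + L) = q i) :
    walkWeight A q (i + L + R) =
      walkWeight A (fun m => if m ≤ i then q m else q (m + L)) (i + R) +
        walkWeight A (fun m => q (i + m)) L := by
  set s : ℕ → Fin d := fun m => if m ≤ i then q m else q (m + L)
  have hs_lo : walkWeight A s i = walkWeight A q i :=
    sum_congr rfl fun m hm => by
      have := mem_range.1 hm
      simp only [s, if_pos this.le, if_pos (show m + 1 ≤ i by omega)]
  have hs_hi : (fun m => s (i + m)) = fun m => q (i + L + m) := by
    funext m
    rcases m with _ | m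
    · simp [s, h]
    · simp only [s, if_neg (show ¬ i + (m + 1) ≤ i by omega)]
      congr 1; omega
  rw [walkWeight_add, walkWeight_add, walkWeight_add A s, hs_lo, hs_hi]
  abel

lemma IsElemCircuit.length_le {c : ℕ} {p : Fin (c + 1) → Fin d} (hp : IsElemCircuit A c p) :
    c ≤ d := by
  simpa using Fintype.card_le_of_injective _ hp.2.2.2

lemma circuitAvgWeights_finite : (circuitAvgWeights A).Finite := by
  refine (Set.finite_range fun x : Σ c : Fin (d + 1), Fin (c + 1) → Fin d =>
    (∑ k : Fin x.1, (A (x.2 k.castSucc) (x.2 k.succ)).unbotD 0) / (x.1 : ℕ)).subset ?_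
  rintro r ⟨c, p, hp, rfl⟩
  exact ⟨⟨⟨c, Nat.lt_succ_of_le (hp.length_le A)⟩, p⟩, rfl⟩

lemma IsElemCircuit.weight_le_mul_sSup {c : ℕ} {p : Fin (c + 1) → Fin d}
    (hp : IsElemCircuit A c p) (hbdd : BddAbove (circuitAvgWeights A)) :
    ∑ t : Fin c, (A (p t.castSucc) (p t.succ)).unbotD 0 ≤ c * sSup (circuitAvgWeights A) := by
  have := le_csSup hbdd ⟨c, p, hp, rfl⟩
  rwa [div_le_iff₀ (by exact_mod_cast hp.1), mul_comm] at this

lemma IsElemCircuit.coe_weight_le_mpPow {c : ℕ} {p : Fin (c + 1) → Fin d}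
    (hp : IsElemCircuit A c p) :
    ((∑ t : Fin c, (A (p t.castSucc) (p t.succ)).unbotD 0 : ℝ) : WithBot ℝ) ≤
      mpPow A c (p 0) (p 0) := by
  set q : ℕ → Fin d := fun m => p (Fin.ofNat (c + 1) m)
  have hcast (t : Fin c) : q t = p t.castSucc ∧ q (t + 1) = p t.succ :=
    ⟨congrArg p (by simp), congrArg p (by simp [Fin.ext_iff])⟩
  have hweight : walkWeight A q c = ∑ t : Fin c, A (p t.castSucc) (p t.succ) := by
    rw [walkWeight, ← Fin.sum_univ_eq_sum_range (fun m => A (q m) (q (m + 1)))]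
    exact sum_congr rfl fun t _ => by rw [(hcast t).1, (hcast t).2]
  have hq0 : q 0 = p 0 := by simp [q]
  have hqc : q c = p 0 := by simp [q, hp.2.1]
  rw [WithBot.coe_sum_unbotD 0 fun t _ => hp.2.2.1 t, ← hweight]
  have := walkWeight_le_mpPow A q c
  rwa [hq0, hqc] at this

lemma walkWeight_le_of_injOn (hbdd : BddAbove (circuitAvgWeights A)) {c : ℕ} {q : ℕ → Fin d}
    (hc : 0 < c) (hq : q c = q 0) (hinj : Set.InjOn q (Set.Iio c)) :
    walkWeight A q c ≤ ((c * sSup (circuitAvgWeights A) : ℝ) : WithBot ℝ) := by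
  by_cases hbot : ∃ m ∈ range c, A (q m) (q (m + 1)) = ⊥
  · rw [walkWeight, WithBot.sum_eq_bot_iff.2 hbot]
    exact bot_le
  push Not at hbot
  have hp : IsElemCircuit A c (fun t => q t) :=
    ⟨hc, hq.symm, fun t => hbot t (mem_range.2 t.2), fun a b hab => Fin.ext (hinj a.2 b.2 hab)⟩
  rw [walkWeight, ← WithBot.coe_sum_unbotD 0 hbot, ← Fin.sum_univ_eq_sum_range,
    WithBot.coe_le_coe]
  exact hp.weight_le_mul_sSup A hbdd

/-- Cycle decomposition: a closed walk splits at a repeated vertex into two shorter closed walks,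
until every piece is an elementary circuit. -/
lemma walkWeight_le_of_closed (hbdd : BddAbove (circuitAvgWeights A)) (c : ℕ) (q : ℕ → Fin d)
    (hq : q c = q 0) :
    walkWeight A q c ≤ ((c * sSup (circuitAvgWeights A) : ℝ) : WithBot ℝ) := by
  induction c using Nat.strong_induction_on generalizing q with
  | _ c IH =>
  rcases c.eq_zero_or_pos with rfl | hc
  · simp [walkWeight]
  by_cases hinj : Set.InjOn q (Set.Iio c)
  · exact walkWeight_le_of_injOn A hbdd hc hq hinj
  obtain ⟨i, j, hij, hjc, hrep⟩ : ∃ i j, i < j ∧ j < c ∧ q j = q i := by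
    simp only [Set.InjOn, Set.mem_Iio, not_forall] at hinj
    obtain ⟨a, ha, b, hb, hab, hne⟩ := hinj
    rcases Nat.lt_or_gt_of_ne hne with h | h
    exacts [⟨a, b, h, hb, hab.symm⟩, ⟨b, a, h, ha, hab⟩]
  obtain ⟨L, rfl⟩ : ∃ L, j = i + L := ⟨j - i, by omega⟩
  obtain ⟨R, rfl⟩ : ∃ R, c = i + L + R := ⟨c - (i + L), by omega⟩
  rw [walkWeight_splice A q i L R hrep]
  have hrest := IH (i + R) (by omega) (fun m => if m ≤ i then q m else q (m + L)) (by
    simp only [if_neg (show ¬ i + R ≤ i by omega), if_pos (Nat.zero_le i)]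
    rw [← hq]; congr 1; omega)
  have hloop := IH L (by omega) (fun m => q (i + m)) (by simpa using hrep)
  calc _ ≤ (((i + R : ℕ) * sSup (circuitAvgWeights A) : ℝ) : WithBot ℝ) +
        ((L * sSup (circuitAvgWeights A) : ℝ) : WithBot ℝ) := add_le_add hrest hloop
    _ = (((i + L + R : ℕ) * sSup (circuitAvgWeights A) : ℝ) : WithBot ℝ) := by
        rw [← WithBot.coe_add, WithBot.coe_inj]; push_cast; ring

lemma mpPow_apply_self_le (hbdd : BddAbove (circuitAvgWeights A)) (c : ℕ) (i : Fin d) :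
    mpPow A c i i ≤ ((c * sSup (circuitAvgWeights A) : ℝ) : WithBot ℝ) := by
  by_cases h : mpPow A c i i = ⊥
  · exact h ▸ bot_le
  obtain ⟨q, hq0, hqc, hq⟩ := exists_walkWeight_eq_mpPow A h
  exact hq ▸ walkWeight_le_of_closed A hbdd c q (hqc.trans hq0.symm)

end MaxPlus

/-- If the graph of `A` has a circuit, then there are a node `k` and `0 < c ≤ d` with
`(A^{⊗c})_{kk} = c·ρ_max(A)`, whence for all `n ≥ 1` and `x ∈ ℝ^d`,
`max_i (A^{⊗(nc)} x)_i ≥ n·c·ρ_max(A) + x_k`. -/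
theorem mpPow_apply_max_lower_bound {d : ℕ}
    (A : Fin d → Fin d → WithBot ℝ)
    (hcirc : ∃ (c : ℕ) (p : Fin (c + 1) → Fin d), IsElemCircuit A c p) :
    ∃ (k : Fin d) (c : ℕ), 0 < c ∧ c ≤ d ∧
      mpPow A c k k = (((c : ℝ) * sSup (circuitAvgWeights A) : ℝ) : WithBot ℝ) ∧
      ∀ n : ℕ, 1 ≤ n → ∀ x : Fin d → ℝ,
        ((((n * c : ℕ) : ℝ) * sSup (circuitAvgWeights A) + x k : ℝ) : WithBot ℝ) ≤
          Finset.univ.sup (fun i =>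
            Finset.univ.sup (fun j => mpPow A (n * c) i j + (x j : WithBot ℝ))) := by
  obtain ⟨c₁, p₁, hp₁⟩ := hcirc
  have hfin := circuitAvgWeights_finite A
  have hne : (circuitAvgWeights A).Nonempty := ⟨_, c₁, p₁, hp₁, rfl⟩
  obtain ⟨c, p, hp, hρ⟩ := hne.csSup_mem hfin
  have hweight : ∑ t : Fin c, (A (p t.castSucc) (p t.succ)).unbotD 0 =
      c * sSup (circuitAvgWeights A) := by
    rw [hρ, mul_div_cancel₀ _ (by exact_mod_cast hp.1.ne')]
  have hdiag : mpPow A c (p 0) (p 0) = ((c * sSup (circuitAvgWeights A) : ℝ) : WithBot ℝ) :=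
    le_antisymm (mpPow_apply_self_le A hfin.bddAbove c _) (hweight ▸ hp.coe_weight_le_mpPow A)
  refine ⟨p 0, c, hp.1, hp.length_le A, hdiag, fun n _ x => ?_⟩
  calc ((((n * c : ℕ) : ℝ) * sSup (circuitAvgWeights A) + x (p 0) : ℝ) : WithBot ℝ)
      = ((n * (c * sSup (circuitAvgWeights A)) : ℝ) : WithBot ℝ) + x (p 0) := by
        rw [← WithBot.coe_add, WithBot.coe_inj]; push_cast; ring
    _ ≤ mpPow A (n * c) (p 0) (p 0) + x (p 0) := by
        gcongr; exact coe_mul_le_mpPow_mul A hdiag.ge n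
    _ ≤ _ := by exact le_sup_of_le (mem_univ _) (le_sup_of_le (mem_univ _) le_rfl)
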